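/- arXiv:1911.03879 — 2 statements merged into one kernel-verified Lean document; each statement's English description precedes it below -/
import Mathlib

section
/- Assume 2·v2(m) = v2(u) + v2(v). Then (Σ_{x ∈ F_{p^m}} ψ(Tr(x^{p^k+1}))) · (Σ_{y ∈ F_{p^m}} ψ(Tr(y^{p^ℓ+1}))) = (-1)^{(p-1)m/2} p^m. -/
open Finset

private lemma exists_good_b (a n : ℕ) (hn : 2 ≤ n) (h : Nat.gcd a n = 2) :
    ∃ b : ℕ, 0 < b ∧ Nat.Coprime b n ∧ a * b ≡ 2 [MOD n] := by
  have h2a : 2 ∣ a := h ▸ Nat.gcd_dvd_left a n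
  have h2n : 2 ∣ n := h ▸ Nat.gcd_dvd_right a n
  obtain ⟨a', rfl⟩ := h2a
  obtain ⟨s, rfl⟩ := h2n
  have hs : 0 < s := by omega
  have hcop : Nat.Coprime a' s := by
    have hg := Nat.gcd_mul_left 2 a' s
    rw [h] at hg
    unfold Nat.Coprime; omega
  haveI : NeZero s := ⟨hs.ne'⟩
  have hu : IsUnit ((a' : ZMod s)) := (ZMod.isUnit_iff_coprime a' s).mpr hcop
  set c : ℕ := ((hu.unit⁻¹ : (ZMod s)ˣ) : ZMod s).val with hc
  have hcs : Nat.Coprime c s := ZMod.val_coe_unit_coprime _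
  have hmod : a' * c ≡ 1 [MOD s] := by
    have hcast : ((a' * c : ℕ) : ZMod s) = ((1 : ℕ) : ZMod s) := by
      push_cast
      rw [hc, ZMod.natCast_val, ZMod.cast_id]
      have h1 : (hu.unit : ZMod s) * ((hu.unit⁻¹ : (ZMod s)ˣ) : ZMod s) = 1 := by
        rw [← Units.val_mul, mul_inv_cancel, Units.val_one]
      rwa [hu.unit_spec] at h1
    exact (ZMod.natCast_eq_natCast_iff _ _ _).mp hcast
  obtain ⟨b, hbodd, hbs, hbc⟩ : ∃ b, b % 2 = 1 ∧ Nat.Coprime b s ∧ b ≡ c [MOD s] := by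
    rcases Nat.even_or_odd c with hce | hco
    · obtain ⟨jc, hjc⟩ := hce
      have hsodd : s % 2 = 1 := by
        rcases Nat.even_or_odd s with hse | hso
        · exfalso
          obtain ⟨js, hjs⟩ := hse
          have h2g : 2 ∣ Nat.gcd c s := Nat.dvd_gcd ⟨jc, by omega⟩ ⟨js, by omega⟩
          have hcs' := hcs
          unfold Nat.Coprime at hcs'; omega
        · obtain ⟨js, hjs⟩ := hso; omega
      refine ⟨c + s, by omega, ?_, ?_⟩
      · exact Nat.coprime_add_self_left.mpr hcs
      · show (c + s) % s = c % s
        exact Nat.add_mod_right c s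
    · obtain ⟨jc, hjc⟩ := hco
      exact ⟨c, by omega, hcs, Nat.ModEq.refl c⟩
  refine ⟨b, by omega, ?_, ?_⟩
  · have hb2 : Nat.Coprime b 2 := Nat.coprime_two_right.mpr (Nat.odd_iff.mpr hbodd)
    exact Nat.Coprime.mul_right hb2 hbs
  · have h1 : a' * b ≡ 1 [MOD s] := (hbc.mul_left a').trans hmod
    have h2 : 2 * (a' * b) ≡ 2 * 1 [MOD 2 * s] := h1.mul_left' 2
    calc 2 * a' * b = 2 * (a' * b) := by ring
      _ ≡ 2 * 1 [MOD 2 * s] := h2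
      _ = 2 := by ring

private lemma sum_pow_eq_sum_sq {F : Type} [Field F] [Fintype F] [DecidableEq F]
    (f : F → ℂ) (a : ℕ) (ha : 2 ≤ a)
    (hcard3 : 3 ≤ Fintype.card F)
    (h : Nat.gcd a (Fintype.card F - 1) = 2) :
    ∑ x : F, f (x ^ a) = ∑ x : F, f (x ^ 2) := by
  obtain ⟨b, hb0, hbcop, hmod⟩ := exists_good_b a (Fintype.card F - 1) (by omega) h
  have hcoprime : (Nat.card Fˣ).Coprime b := by
    rw [Nat.card_eq_fintype_card, Fintype.card_units]
    exact hbcop.symm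
  have hinj : Function.Injective (fun x : F => x ^ b) := by
    intro x y hxy
    simp only at hxy
    by_cases hx : x = 0
    · subst hx
      rw [zero_pow hb0.ne'] at hxy
      exact ((pow_eq_zero_iff hb0.ne').mp hxy.symm).symm
    · by_cases hy : y = 0
      · subst hy
        rw [zero_pow hb0.ne'] at hxy
        exact absurd ((pow_eq_zero_iff hb0.ne').mp hxy) hx
      · have := (powCoprime hcoprime).injective (a₁ := Units.mk0 x hx) (a₂ := Units.mk0 y hy) ?_
        · simpa using congrArg Units.val this
        · apply Units.ext
          simpa [powCoprime] using hxy
  have hbij : Function.Bijective (fun x : F => x ^ b) :=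
    Finite.injective_iff_bijective.mp hinj
  have hpow : ∀ x : F, (x ^ b) ^ a = x ^ 2 := by
    intro x
    have hab : 2 ≤ a * b := by nlinarith
    have hdvd : Fintype.card F - 1 ∣ a * b - 2 := (Nat.modEq_iff_dvd' hab).mp hmod.symm
    obtain ⟨t, ht⟩ := hdvd
    have hab' : a * b = 2 + (Fintype.card F - 1) * t := by omega
    rw [← pow_mul, mul_comm b a, hab']
    by_cases hx : x = 0
    · subst hx; rw [zero_pow (by omega), zero_pow (by omega)]
    · rw [pow_add, pow_mul, FiniteField.pow_card_sub_one_eq_one x hx, one_pow, mul_one]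
  calc ∑ x : F, f (x ^ a) = ∑ x : F, f ((x ^ b) ^ a) :=
        (Function.Bijective.sum_comp hbij (fun z => f (z ^ a))).symm
    _ = ∑ x : F, f (x ^ 2) := by
        apply Finset.sum_congr rfl
        intro x _
        rw [hpow x]

private lemma gcd_pow_succ_pow_pred (p m k : ℕ) (hp : Odd p) (hp2 : 2 ≤ p) (hm : 0 < m)
    (hnd : ¬ (2 * Nat.gcd m k ∣ m)) :
    Nat.gcd (p ^ k + 1) (p ^ m - 1) = 2 := by
  have hpm1 : 1 ≤ p ^ m := Nat.one_le_pow _ _ (by omega)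
  have hpk1 : 1 ≤ p ^ k := Nat.one_le_pow _ _ (by omega)
  have hpmmod : p ^ m % 2 = 1 := by
    obtain ⟨jm, hjm⟩ := hp.pow (n := m); omega
  have hpkmod : p ^ k % 2 = 1 := by
    obtain ⟨jk, hjk⟩ := hp.pow (n := k); omega
  have h2 : 2 ∣ Nat.gcd (p ^ k + 1) (p ^ m - 1) :=
    Nat.dvd_gcd (by omega) (by omega)
  rcases Nat.eq_zero_or_pos k with hk0 | hk
  · subst hk0
    simp only [pow_zero]
    exact Nat.gcd_eq_left (by omega)
  set d := Nat.gcd (p ^ k + 1) (p ^ m - 1) with hd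
  have hd1 : d ∣ p ^ k + 1 := Nat.gcd_dvd_left _ _
  have hd2 : d ∣ p ^ m - 1 := Nat.gcd_dvd_right _ _
  have hpm2 : 2 ≤ p ^ m := le_trans hp2 (Nat.le_self_pow hm.ne' p)
  have hdpos : 0 < d := Nat.gcd_pos_of_pos_right _ (by omega)
  haveI : NeZero d := ⟨hdpos.ne'⟩
  have hfact : p ^ (2 * k) - 1 = (p ^ k + 1) * (p ^ k - 1) := by
    have h2k : p ^ (2 * k) = p ^ k * p ^ k := by rw [two_mul, pow_add]
    have hkey : (p ^ k + 1) * (p ^ k - 1) + 1 = p ^ k * p ^ k := by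
      obtain ⟨n, hn⟩ : ∃ n, p ^ k = n + 1 := ⟨p ^ k - 1, by omega⟩
      rw [hn]
      simp only [Nat.add_sub_cancel]
      ring
    rw [h2k]; omega
  have hd2k : d ∣ p ^ (2 * k) - 1 := hfact ▸ Dvd.dvd.mul_right hd1 _
  -- pass to ZMod d
  have hcast : ∀ j : ℕ, d ∣ p ^ j - 1 → ((p : ZMod d)) ^ j = 1 := by
    intro j hj
    have h1j : 1 ≤ p ^ j := Nat.one_le_pow _ _ (by omega)
    have : ((p ^ j - 1 : ℕ) : ZMod d) = 0 := (ZMod.natCast_eq_zero_iff _ _).mpr hj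
    rw [Nat.cast_sub h1j] at this
    push_cast at this
    rwa [sub_eq_zero] at this
  have hx2k : ((p : ZMod d)) ^ (2 * k) = 1 := hcast _ hd2k
  have hxm : ((p : ZMod d)) ^ m = 1 := hcast _ hd2
  have hord : orderOf ((p : ZMod d)) ∣ Nat.gcd (2 * k) m :=
    Nat.dvd_gcd (orderOf_dvd_of_pow_eq_one hx2k) (orderOf_dvd_of_pow_eq_one hxm)
  -- gcd (2k) m = gcd m k
  have hupos : 0 < Nat.gcd m k := Nat.gcd_pos_of_pos_left k hm
  have hgu : Nat.gcd (2 * k) m = Nat.gcd m k := by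
    have h1 : Nat.gcd m k ∣ Nat.gcd (2 * k) m :=
      Nat.dvd_gcd ((Nat.gcd_dvd_right m k).mul_left 2) (Nat.gcd_dvd_left m k)
    have h2' : Nat.gcd (2 * k) m ∣ 2 * Nat.gcd m k := by
      have := Nat.dvd_gcd (Nat.gcd_dvd_left (2 * k) m)
        ((Nat.gcd_dvd_right (2 * k) m).mul_left 2)
      rwa [Nat.gcd_mul_left, Nat.gcd_comm k m] at this
    obtain ⟨t, ht⟩ := h1
    have ht2 : t ∣ 2 := by
      have : Nat.gcd m k * t ∣ Nat.gcd m k * 2 := by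
        rw [← ht, mul_comm (Nat.gcd m k) 2]; exact h2'
      exact (mul_dvd_mul_iff_left hupos.ne').mp this
    rcases (Nat.prime_two).eq_one_or_self_of_dvd t ht2 with rfl | rfl
    · omega
    · exfalso
      apply hnd
      have : Nat.gcd (2 * k) m ∣ m := Nat.gcd_dvd_right _ _
      rwa [ht, mul_comm] at this
  rw [hgu] at hord
  have hordk : orderOf ((p : ZMod d)) ∣ k := hord.trans (Nat.gcd_dvd_right m k)
  have hxk : ((p : ZMod d)) ^ k = 1 := orderOf_dvd_iff_pow_eq_one.mp hordk
  have hdk : d ∣ p ^ k - 1 := by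
    have : ((p ^ k - 1 : ℕ) : ZMod d) = 0 := by
      rw [Nat.cast_sub hpk1]
      push_cast
      rw [hxk, sub_self]
    exact (ZMod.natCast_eq_zero_iff _ _).mp this
  have hdvd2 : d ∣ 2 := by
    have := Nat.dvd_sub hd1 hdk
    have he : p ^ k + 1 - (p ^ k - 1) = 2 := by omega
    rwa [he] at this
  exact Nat.dvd_antisymm hdvd2 h2

theorem statement15
    (p m k l : ℕ) (hp : p.Prime) (hodd : Odd p) (hm : 0 < m)
    (F : Type) [Field F] [Fintype F] [Algebra (ZMod p) F]
    (hcard : Fintype.card F = p ^ m)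
    (Tr : F → ZMod p) (hTr : ∀ x, Tr x = Algebra.trace (ZMod p) F x)
    (u v : ℕ) (hu : u = Nat.gcd m k) (hv : v = Nat.gcd m l)
    (ψ : AddChar (ZMod p) ℂ) (hψ : ∃ a, ψ a ≠ 1)
    (hval : 2 * padicValNat 2 m = padicValNat 2 u + padicValNat 2 v)
 :
    (∑ x : F, ψ (Tr (x ^ (p ^ k + 1)))) * (∑ y : F, ψ (Tr (y ^ (p ^ l + 1))))
      = (-1) ^ ((p - 1) * m / 2) * (p : ℂ) ^ m := by
  classical
  haveI : Fact p.Prime := ⟨hp⟩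
  have hp2 : 2 ≤ p := hp.two_le
  have hp3 : 3 ≤ p := by obtain ⟨j, hj⟩ := hodd; omega
  haveI hcharF : CharP F p := charP_of_injective_algebraMap (algebraMap (ZMod p) F).injective p
  have hring : ringChar F = p := ringChar.eq F p
  have hF2 : ringChar F ≠ 2 := by omega
  -- padic valuation facts
  have hu_dvd : u ∣ m := hu ▸ Nat.gcd_dvd_left m k
  have hv_dvd : v ∣ m := hv ▸ Nat.gcd_dvd_left m l
  have hu_pos : 0 < u := hu ▸ Nat.gcd_pos_of_pos_left k hm
  have hv_pos : 0 < v := hv ▸ Nat.gcd_pos_of_pos_left l hm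
  have hvle : ∀ a : ℕ, 0 < a → a ∣ m → padicValNat 2 a ≤ padicValNat 2 m := by
    intro a ha hdvd
    have h1 : (2 : ℕ) ^ padicValNat 2 a ∣ a := pow_padicValNat_dvd
    exact (padicValNat_dvd_iff_le hm.ne').mp (h1.trans hdvd)
  have hule := hvle u hu_pos hu_dvd
  have hvle' := hvle v hv_pos hv_dvd
  have hueq : padicValNat 2 u = padicValNat 2 m := by omega
  have hveq : padicValNat 2 v = padicValNat 2 m := by omega
  have hnd : ∀ w : ℕ, 0 < w → padicValNat 2 w = padicValNat 2 m → ¬ (2 * w ∣ m) := by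
    intro w hw hweq hdvd
    have h1 : (2 : ℕ) ^ (padicValNat 2 w + 1) ∣ m := by
      have : (2 : ℕ) ^ (padicValNat 2 w + 1) ∣ 2 * w := by
        rw [pow_succ, mul_comm]
        exact Nat.mul_dvd_mul_left 2 pow_padicValNat_dvd
      exact this.trans hdvd
    have := (padicValNat_dvd_iff_le hm.ne').mp h1
    omega
  have hndk : ¬ (2 * Nat.gcd m k ∣ m) := hu ▸ hnd u hu_pos hueq
  have hndl : ¬ (2 * Nat.gcd m l ∣ m) := hv ▸ hnd v hv_pos hveq
  -- card facts
  have hcard3 : 3 ≤ Fintype.card F := by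
    rw [hcard]
    calc 3 ≤ p := hp3
      _ ≤ p ^ m := Nat.le_self_pow hm.ne' p
  have hgk : Nat.gcd (p ^ k + 1) (Fintype.card F - 1) = 2 := by
    rw [hcard]; exact gcd_pow_succ_pow_pred p m k hodd hp2 hm hndk
  have hgl : Nat.gcd (p ^ l + 1) (Fintype.card F - 1) = 2 := by
    rw [hcard]; exact gcd_pow_succ_pow_pred p m l hodd hp2 hm hndl
  -- the additive character e on F
  set e : AddChar F ℂ := ψ.compAddMonoidHom (Algebra.trace (ZMod p) F).toAddMonoidHom with he
  have hTr' : ∀ x : F, ψ (Tr x) = e x := fun x => by rw [hTr]; rfl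
  haveI : Module.Finite (ZMod p) F := Module.Finite.of_finite
  have hsurj : Function.Surjective (Algebra.trace (ZMod p) F) :=
    Algebra.trace_surjective (ZMod p) F
  have hene : e ≠ 1 := by
    obtain ⟨a, ha⟩ := hψ
    obtain ⟨x, hx⟩ := hsurj a
    refine AddChar.ne_one_iff.mpr ⟨x, ?_⟩
    show ψ (Algebra.trace (ZMod p) F x) ≠ 1
    rw [hx]; exact ha
  have hprim : e.IsPrimitive := AddChar.IsPrimitive.of_ne_one hene
  -- the quadratic character
  set χ : MulChar F ℂ := (quadraticChar F).ringHomComp (Int.castRingHom ℂ) with hχ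
  have hχne : χ ≠ 1 :=
    (MulChar.ringHomComp_ne_one_iff (Int.cast_injective (α := ℂ))).mpr (quadraticChar_ne_one hF2)
  have hχquad : χ.IsQuadratic := (quadraticChar_isQuadratic F).comp _
  -- sum over squares equals the Gauss sum
  have hsum2 : ∑ x : F, e (x ^ 2) = gaussSum χ e := by
    have h0 : ∑ t : F, ∑ x ∈ univ.filter (fun x => x ^ 2 = t), e (x ^ 2)
        = ∑ x : F, e (x ^ 2) :=
      Finset.sum_fiberwise_of_maps_to (fun x _ => mem_univ _) _
    rw [← h0]
    have hfib : ∀ t : F, ∑ x ∈ univ.filter (fun x => x ^ 2 = t), e (x ^ 2)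
        = (((quadraticChar F t : ℤ) : ℂ) + 1) * e t := by
      intro t
      rw [Finset.sum_congr rfl (fun x hx => by rw [(Finset.mem_filter.mp hx).2])]
      rw [Finset.sum_const, nsmul_eq_mul]
      congr 1
      have hcs := quadraticChar_card_sqrts hF2 t
      have hset : {x : F | x ^ 2 = t}.toFinset = univ.filter (fun x => x ^ 2 = t) := by
        ext x; simp
      rw [hset] at hcs
      have := congrArg (fun z : ℤ => (z : ℂ)) hcs
      push_cast at this ⊢
      linear_combination this
    simp_rw [hfib, add_mul, one_mul, Finset.sum_add_distrib]
    have hzero : ∑ t : F, e t = 0 := by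
      refine AddChar.sum_eq_zero_iff_ne_zero.mpr ?_
      exact hene
    rw [hzero, add_zero]
    rfl
  have hSk : ∑ x : F, ψ (Tr (x ^ (p ^ k + 1))) = gaussSum χ e := by
    simp_rw [hTr']
    rw [sum_pow_eq_sum_sq (fun t => e t) (p ^ k + 1)
      (by have : 1 ≤ p ^ k := Nat.one_le_pow _ _ (by omega); omega) hcard3 hgk]
    exact hsum2
  have hSl : ∑ y : F, ψ (Tr (y ^ (p ^ l + 1))) = gaussSum χ e := by
    simp_rw [hTr']
    rw [sum_pow_eq_sum_sq (fun t => e t) (p ^ l + 1)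
      (by have : 1 ≤ p ^ l := Nat.one_le_pow _ _ (by omega); omega) hcard3 hgl]
    exact hsum2
  rw [hSk, hSl, ← sq, gaussSum_sq hχne hχquad hprim]
  -- evaluate χ (-1)
  have hχneg : χ (-1) = ((quadraticChar F (-1) : ℤ) : ℂ) := rfl
  rw [hχneg, quadraticChar_neg_one hF2, hcard]
  -- final arithmetic
  have hpm_odd : p ^ m % 2 = 1 := by
    obtain ⟨j, hj⟩ := hodd.pow (n := m); omega
  obtain ⟨r, hr⟩ := hodd
  have hexp : (p - 1) * m / 2 = r * m := by
    have h1 : (p - 1) * m = 2 * (r * m) := by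
      rw [hr, Nat.add_sub_cancel, mul_assoc]
    omega
  have hmod4 : p ^ m % 4 = if Even (r * m) then 1 else 3 := by
    rcases Nat.even_or_odd r with hre | hro
    · obtain ⟨j, hj⟩ := hre
      have hp4 : p % 4 = 1 := by omega
      rw [Nat.pow_mod p m 4, hp4, one_pow]
      have : Even (r * m) := ⟨j * m, by rw [hj]; ring⟩
      simp [this]
    · obtain ⟨j, hj⟩ := hro
      have hp4 : p % 4 = 3 := by omega
      have hbase : p ^ m % 4 = 3 ^ m % 4 := by rw [Nat.pow_mod p m 4, hp4]
      have h9 : ∀ i : ℕ, (9 : ℕ) ^ i % 4 = 1 := by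
        intro i
        induction i with
        | zero => rfl
        | succ n ih => rw [pow_succ, Nat.mul_mod, ih]
      have h32 : (3 : ℕ) ^ 2 = 9 := by norm_num
      rcases Nat.even_or_odd m with hme | hmo
      · obtain ⟨i, hi⟩ := hme
        have h3 : (3 : ℕ) ^ m % 4 = 1 := by
          rw [hi, ← two_mul, pow_mul, h32, h9]
        have : Even (r * m) := ⟨r * i, by rw [hi]; ring⟩
        rw [hbase, h3]; simp [this]
      · obtain ⟨i, hi⟩ := hmo
        have h3 : (3 : ℕ) ^ m % 4 = 3 := by
          rw [hi, pow_add, pow_mul, pow_one, h32, Nat.mul_mod, h9]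
        have hodd_rm : ¬ Even (r * m) := by
          rw [Nat.even_mul]
          push_neg
          constructor
          · exact fun h => by obtain ⟨w, hw⟩ := h; omega
          · exact fun h => by obtain ⟨w, hw⟩ := h; omega
        rw [hbase, h3]; simp [hodd_rm]
  rw [ZMod.χ₄_nat_eq_if_mod_four, hpm_odd, hexp]
  rcases Nat.even_or_odd (r * m) with hev | hod
  · rw [if_neg (by omega), if_pos (by rw [hmod4]; simp [hev]), hev.neg_one_pow]
    push_cast
    ring
  · have hne : p ^ m % 4 ≠ 1 := by rw [hmod4]; simp [Nat.not_even_iff_odd.mpr hod]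
    rw [if_neg (by omega), if_neg hne, hod.neg_one_pow]
    push_cast
    ring
end

section
/- Assume v2(m) > v2(u) + 1 and v2(m) > v2(v) + 1. Then the number of pairs (a,b) ∈ F_{p^m} × F_{p^m} with (a,b) ≠ (0,0) such that at least one of the two equations x^{p^{2k}} + x = -a^{p^k} and y^{p^{2ℓ}} + y = -b^{p^ℓ} has no solution in F_{p^m} equals p^{2m} - p^{2(m-u-v)}. -/
/-!
The condition on `a` says that `-a ^ p ^ k` lies in the image of the additive map
`L x = x ^ p ^ (2k) + x`; as `a ↦ -a ^ p ^ k` is a bijection of `F`, there are `|F| / |ker L|`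
such `a`. A nonzero `x` lies in `ker L` iff `x ^ (p ^ (2k) - 1) = -1` in the cyclic group `Fˣ`
of order `p ^ m - 1`, so if that equation is solvable at all, `ker L` has
`gcd (p ^ m - 1) (p ^ (2k) - 1) + 1 = p ^ gcd(m, 2k)` elements.

The 2-adic hypothesis says exactly that `4u ∣ m`. Hence `gcd(m, 2k) = 2u`, `k / u` is odd and
`(p ^ m - 1) / (p ^ (2u) - 1)` is even. The last fact yields `y` with `y ^ (p ^ (2u) - 1) = -1`
(a suitable power of a generator), and since `(p ^ (2k) - 1) / (p ^ (2u) - 1)` is odd, also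
`y ^ (p ^ (2k) - 1) = -1`. So the solvable `a` number `p ^ (m - 2u)`, and the pairs counted are
the complement of a product of sets of sizes `p ^ (m - 2u)` and `p ^ (m - 2v)`.
-/

theorem Nat.four_mul_dvd_of_padicValNat_add_one_lt {u m : ℕ} (hum : u ∣ m)
    (h : padicValNat 2 u + 1 < padicValNat 2 m) : 4 * u ∣ m := by
  have hm : m ≠ 0 := by rintro rfl; simp at h
  have hu : u ≠ 0 := by rintro rfl; exact hm (zero_dvd_iff.1 hum)
  obtain ⟨e, u', hu', rfl⟩ := Nat.exists_eq_pow_mul_and_not_dvd hu 2 (by norm_num)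
  have he : padicValNat 2 (2 ^ e * u') = e := by
    rw [padicValNat.mul (by positivity) (by rintro rfl; simp at hu'), padicValNat.prime_pow,
      padicValNat.eq_zero_of_not_dvd hu', add_zero]
  rw [he] at h
  rw [show 4 * (2 ^ e * u') = 2 ^ (e + 2) * u' by ring]
  refine Nat.Coprime.mul_dvd_of_dvd_of_dvd ?_ ?_ ((Dvd.intro_left _ rfl).trans hum)
  · exact Nat.Coprime.pow_left _ ((Nat.Prime.coprime_iff_not_dvd Nat.prime_two).2 hu')
  · exact (pow_dvd_pow 2 (by omega)).trans pow_padicValNat_dvd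

theorem Nat.gcd_two_mul_right_of_two_mul_gcd_dvd {m k : ℕ} (h : 2 * m.gcd k ∣ m) :
    m.gcd (2 * k) = 2 * m.gcd k :=
  Nat.dvd_antisymm
    (Nat.gcd_mul_left 2 m k ▸ Nat.gcd_dvd_gcd_of_dvd_left _ (dvd_mul_left m 2))
    (Nat.dvd_gcd h (mul_dvd_mul_left 2 (Nat.gcd_dvd_right m k)))

theorem Nat.odd_div_gcd_of_two_mul_gcd_dvd {m k : ℕ} (hm : m ≠ 0) (h : 2 * m.gcd k ∣ m) :
    Odd (k / m.gcd k) := by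
  rw [← Nat.not_even_iff_odd]
  rintro ⟨j, hj⟩
  have hu : 0 < m.gcd k := Nat.gcd_pos_of_pos_left _ (Nat.pos_of_ne_zero hm)
  have hk : 2 * m.gcd k ∣ k := by
    have := Nat.div_mul_cancel (Nat.gcd_dvd_right m k)
    exact ⟨j, by rw [hj] at this; linarith⟩
  have := Nat.le_of_dvd hu (Nat.dvd_gcd h hk)
  omega

theorem Nat.odd_geom_sum_iff {a : ℕ} (ha : Odd a) (j : ℕ) :
    Odd (∑ i ∈ Finset.range j, a ^ i) ↔ Odd j := by
  rw [Finset.odd_sum_iff_odd_card_odd, Finset.filter_true_of_mem fun i _ ↦ ha.pow,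
    Finset.card_range]

theorem IsCyclic.ncard_setOf_pow_eq {G : Type*} [CommGroup G] [IsCyclic G] [Finite G] {n : ℕ}
    {c : G} (hc : ∃ y, y ^ n = c) : {y : G | y ^ n = c}.ncard = (Nat.card G).gcd n := by
  obtain ⟨y₀, rfl⟩ := hc
  have hfiber :
      {y : G | y ^ n = y₀ ^ n} = (y₀ * ·) '' ((powMonoidHom n : G →* G).ker : Set G) := by
    ext y
    refine ⟨fun hy ↦ ⟨y₀⁻¹ * y, ?_, mul_inv_cancel_left y₀ y⟩, ?_⟩
    · simp_all [mul_pow]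
    · rintro ⟨z, hz, rfl⟩
      simp_all [mul_pow]
  rw [hfiber, Set.ncard_image_of_injective _ (mul_right_injective y₀), ← Nat.card_coe_set_eq,
    SetLike.coe_sort_coe, IsCyclic.card_powMonoidHom_ker]

theorem Set.ncard_setOf_ne_zero_and_not_mem_or_not_mem {M N : Type*} [Zero M] [Zero N]
    [Finite M] [Finite N] {A : Set M} {B : Set N} (hA : 0 ∈ A) (hB : 0 ∈ B) :
    ({ab : M × N | ab ≠ (0, 0) ∧ (ab.1 ∉ A ∨ ab.2 ∉ B)}.ncard : ℤ) =
      Nat.card M * Nat.card N - A.ncard * B.ncard := by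
  have hset : {ab : M × N | ab ≠ (0, 0) ∧ (ab.1 ∉ A ∨ ab.2 ∉ B)} = (A ×ˢ B)ᶜ := by
    ext ⟨a, b⟩
    simp only [Set.mem_ofPred_eq, Set.mem_compl_iff, Set.mem_prod, ne_eq, Prod.mk.injEq]
    constructor
    · rintro ⟨-, h⟩ ⟨ha, hb⟩
      tauto
    · intro h
      refine ⟨?_, not_and_or.1 h⟩
      rintro ⟨rfl, rfl⟩
      exact h ⟨hA, hB⟩
  have hcompl := Set.ncard_compl_add_ncard (A ×ˢ B)
  rw [Set.ncard_prod, Nat.card_prod] at hcompl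
  rw [hset, eq_sub_iff_add_eq]
  exact_mod_cast hcompl

def iterateFrobeniusAddId (R : Type*) [CommSemiring R] (p e : ℕ) [ExpChar R p] : R →+ R :=
  (iterateFrobenius R p e : R →+* R).toAddMonoidHom + AddMonoidHom.id R

theorem iterateFrobeniusAddId_apply {R : Type*} [CommSemiring R] (p e : ℕ) [ExpChar R p] (x : R) :
    iterateFrobeniusAddId R p e x = x ^ p ^ e + x := rfl

namespace FiniteField

variable {F : Type*} [Field F] [Finite F]

theorem ne_zero_of_card_eq_pow {p m : ℕ} (hcard : Nat.card F = p ^ m) : m ≠ 0 := by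
  rintro rfl
  simpa [hcard] using Finite.one_lt_card (α := F)

theorem exists_pow_eq_neg_one {g : ℕ} (h : 2 * g ∣ Nat.card F - 1) :
    ∃ y : Fˣ, y ^ g = -1 := by
  obtain ⟨ζ, hζ⟩ := IsCyclic.exists_generator (α := Fˣ)
  obtain ⟨c, hc⟩ := h
  have horder : orderOf ζ = 2 * g * c := by
    rw [orderOf_eq_card_of_forall_mem_zpowers hζ, Nat.card_units, hc]
  have hpos : 0 < g * c := by
    have := orderOf_pos ζ
    rw [horder, mul_assoc] at this
    omega
  have hne : ζ ^ (g * c) ≠ 1 :=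
    pow_ne_one_of_lt_orderOf hpos.ne' (by rw [horder, mul_assoc]; omega)
  have hsq : ((ζ ^ (g * c) : Fˣ) : F) ^ 2 = 1 := by
    rw [← Units.val_pow_eq_pow_val, ← pow_mul, show g * c * 2 = orderOf ζ by rw [horder]; ring,
      pow_orderOf_eq_one, Units.val_one]
  refine ⟨ζ ^ c, ?_⟩
  rw [← pow_mul, mul_comm]
  rcases sq_eq_one_iff.mp hsq with h1 | h1
  · exact absurd (Units.ext h1) hne
  · exact Units.ext h1

theorem card_ker_iterateFrobeniusAddId {p e : ℕ} [ExpChar F p]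
    (h : ∃ y : Fˣ, y ^ (p ^ e - 1) = -1) :
    Nat.card (iterateFrobeniusAddId F p e).ker = (Nat.card F - 1).gcd (p ^ e - 1) + 1 := by
  set n := p ^ e - 1
  have hpe : p ^ e = n + 1 := (Nat.sub_add_cancel (Nat.one_le_pow _ _ (expChar_pos F p))).symm
  have hker : ((iterateFrobeniusAddId F p e).ker : Set F) =
      insert 0 (Units.val '' {y : Fˣ | y ^ n = -1}) := by
    ext x
    rcases eq_or_ne x 0 with rfl | hx
    · simp
    · lift x to Fˣ using hx.isUnit
      simp only [SetLike.mem_coe, AddMonoidHom.mem_ker, iterateFrobeniusAddId_apply, hpe,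
        Set.mem_insert_iff, hx, false_or, Units.val_injective.mem_set_image, Set.mem_ofPred_eq,
        Units.ext_iff, Units.val_pow_eq_pow_val, Units.val_neg, Units.val_one]
      rw [pow_succ, ← add_one_mul, mul_eq_zero, or_iff_left hx, add_eq_zero_iff_eq_neg]
  rw [← SetLike.coe_sort_coe, Nat.card_coe_set_eq, hker, Set.ncard_insert_of_notMem,
    Set.ncard_image_of_injective _ Units.val_injective, IsCyclic.ncard_setOf_pow_eq h,
    Nat.card_units]
  rintro ⟨y, -, hy⟩
  exact y.ne_zero hy

theorem ncard_setOf_exists_eq_neg_pow {p e k : ℕ} [ExpChar F p] :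
    {a : F | ∃ x, x ^ p ^ e + x = -(a ^ p ^ k)}.ncard =
      Nat.card (iterateFrobeniusAddId F p e).range := by
  have hinj : Function.Injective fun a : F ↦ -(a ^ p ^ k) :=
    neg_injective.comp (iterateFrobenius F p k).injective
  have hpre : {a : F | ∃ x, x ^ p ^ e + x = -(a ^ p ^ k)} =
      (fun a ↦ -(a ^ p ^ k)) ⁻¹' ((iterateFrobeniusAddId F p e).range : Set F) := by
    ext a
    simp [iterateFrobeniusAddId_apply]
  rw [hpre, Set.ncard_preimage_of_injective_subset_range hinj
    fun x _ ↦ Finite.injective_iff_surjective.1 hinj x, ← Nat.card_coe_set_eq,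
    SetLike.coe_sort_coe]

theorem exists_pow_two_mul_sub_one_eq_neg_one {p m k : ℕ} (hodd : Odd p)
    (hcard : Nat.card F = p ^ m) (hdvd : 4 * m.gcd k ∣ m) :
    ∃ y : Fˣ, y ^ (p ^ (2 * k) - 1) = -1 := by
  have hm := ne_zero_of_card_eq_pow hcard
  have hj := Nat.odd_div_gcd_of_two_mul_gcd_dvd hm ((Dvd.intro 2 (by ring)).trans hdvd)
  have hk := Nat.mul_div_cancel' (Nat.gcd_dvd_right m k)
  obtain ⟨t, ht⟩ := hdvd
  generalize m.gcd k = u at ht hj hk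
  subst ht
  have hq : Odd (p ^ (2 * u)) := hodd.pow
  obtain ⟨y, hy⟩ := exists_pow_eq_neg_one (F := F) (g := p ^ (2 * u) - 1) (by
    rw [hcard, show 4 * u * t = 2 * u * (2 * t) by ring, pow_mul p (2 * u),
      ← geom_sum_mul_of_one_le (x := p ^ (2 * u)) hq.pos (2 * t)]
    refine mul_dvd_mul (even_iff_two_dvd.1 ?_) dvd_rfl
    rw [← Nat.not_odd_iff_even, Nat.odd_geom_sum_iff hq]
    simp)
  refine ⟨y, ?_⟩
  rw [← hk, ← mul_assoc, pow_mul p (2 * u),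
    ← geom_sum_mul_of_one_le (x := p ^ (2 * u)) hq.pos (k / u), mul_comm, pow_mul, hy,
    ((Nat.odd_geom_sum_iff hq _).2 hj).neg_one_pow]

theorem ncard_setOf_exists_pow_add_eq_neg {p m k : ℕ} [ExpChar F p] (hodd : Odd p)
    (hcard : Nat.card F = p ^ m) (hdvd : 4 * m.gcd k ∣ m) :
    {a : F | ∃ x, x ^ p ^ (2 * k) + x = -(a ^ p ^ k)}.ncard = p ^ (m - 2 * m.gcd k) := by
  have h2 : 2 * m.gcd k ∣ m := (Dvd.intro 2 (by ring)).trans hdvd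
  have hker : Nat.card (iterateFrobeniusAddId F p (2 * k)).ker = p ^ (2 * m.gcd k) := by
    rw [card_ker_iterateFrobeniusAddId (exists_pow_two_mul_sub_one_eq_neg_one hodd hcard hdvd),
      hcard, Nat.pow_sub_one_gcd_pow_sub_one, Nat.gcd_two_mul_right_of_two_mul_gcd_dvd h2,
      Nat.sub_add_cancel (Nat.one_le_pow _ _ hodd.pos)]
  have hrange :
      Nat.card (iterateFrobeniusAddId F p (2 * k)).range * p ^ (2 * m.gcd k) = p ^ m := by
    rw [← hker, ← AddSubgroup.index_ker, mul_comm, AddSubgroup.card_mul_index, hcard]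
  have h2m : 2 * m.gcd k ≤ m :=
    Nat.le_of_dvd (Nat.pos_of_ne_zero (ne_zero_of_card_eq_pow hcard)) h2
  rw [ncard_setOf_exists_eq_neg_pow, ← Nat.pow_div h2m hodd.pos, ← hrange,
    Nat.mul_div_cancel _ (pow_pos hodd.pos _)]

end FiniteField

theorem statement18_general
    (p m k l : ℕ) (hp : p.Prime) (hodd : Odd p)
    (F : Type) [Field F] [Fintype F]
    (hcard : Fintype.card F = p ^ m)
    (u v : ℕ) (hu : u = Nat.gcd m k) (hv : v = Nat.gcd m l)
    (hu2 : padicValNat 2 u + 1 < padicValNat 2 m)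
    (hv2 : padicValNat 2 v + 1 < padicValNat 2 m) :
    ({ab : F × F | ab ≠ (0, 0) ∧
        ((¬ ∃ x : F, x ^ (p ^ (2 * k)) + x = -(ab.1 ^ (p ^ k))) ∨
         (¬ ∃ y : F, y ^ (p ^ (2 * l)) + y = -(ab.2 ^ (p ^ l))))}.ncard : ℤ)
      = (p : ℤ) ^ (2 * m) - (p : ℤ) ^ (2 * (m - u - v)) := by
  subst hu hv
  have : Fact p.Prime := ⟨hp⟩
  have : CharP F p := charP_of_card_eq_prime_pow hcard
  rw [← Nat.card_eq_fintype_card] at hcard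
  have hdk := Nat.four_mul_dvd_of_padicValNat_add_one_lt (Nat.gcd_dvd_left m k) hu2
  have hdl := Nat.four_mul_dvd_of_padicValNat_add_one_lt (Nat.gcd_dvd_left m l) hv2
  have hm := Nat.pos_of_ne_zero (FiniteField.ne_zero_of_card_eq_pow hcard)
  have hku := Nat.le_of_dvd hm hdk
  have hlv := Nat.le_of_dvd hm hdl
  set A := {a : F | ∃ x, x ^ p ^ (2 * k) + x = -(a ^ p ^ k)}
  set B := {b : F | ∃ y, y ^ p ^ (2 * l) + y = -(b ^ p ^ l)}
  show (({ab : F × F | ab ≠ (0, 0) ∧ (ab.1 ∉ A ∨ ab.2 ∉ B)}).ncard : ℤ) = _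
  have hA : (0 : F) ∈ A := ⟨0, by simp [hp.ne_zero]⟩
  have hB : (0 : F) ∈ B := ⟨0, by simp [hp.ne_zero]⟩
  rw [Set.ncard_setOf_ne_zero_and_not_mem_or_not_mem hA hB,
    FiniteField.ncard_setOf_exists_pow_add_eq_neg hodd hcard hdk,
    FiniteField.ncard_setOf_exists_pow_add_eq_neg hodd hcard hdl, hcard]
  push_cast
  rw [← pow_add, ← pow_add]
  congr 2 <;> omega

theorem statement18
    (p m k l : ℕ) (hp : p.Prime) (hodd : Odd p) (hm : 0 < m)
    (F : Type) [Field F] [Fintype F]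
    (hcard : Fintype.card F = p ^ m)
    (u v : ℕ) (hu : u = Nat.gcd m k) (hv : v = Nat.gcd m l)
    (hu2 : padicValNat 2 u + 1 < padicValNat 2 m)
    (hv2 : padicValNat 2 v + 1 < padicValNat 2 m) :
    ({ab : F × F | ab ≠ (0, 0) ∧
        ((¬ ∃ x : F, x ^ (p ^ (2 * k)) + x = -(ab.1 ^ (p ^ k))) ∨
         (¬ ∃ y : F, y ^ (p ^ (2 * l)) + y = -(ab.2 ^ (p ^ l))))}.ncard : ℤ)
      = (p : ℤ) ^ (2 * m) - (p : ℤ) ^ (2 * (m - u - v)) :=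
  statement18_general p m k l hp hodd F hcard u v hu hv hu2 hv2
end
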